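/- Let n ≥ 2, let Ω ∈ ℝⁿ be a unit vector, let η ∈ ℝ, and let G_η(u) := e^{η(u·Ω)²}/Z_η with Z_η := ∫_{S^{n−1}} e^{η(v·Ω)²} dσ(v). Write P := Id − Ω⊗Ω, u_⊥ := u − (u·Ω)Ω, and d₂₂ := ∫_{S^{n−1}} (u·Ω)²(1 − (u·Ω)²) G_η(u) dσ(u). Then for all indices i, j, k ∈ {1,…,n}: ∫_{S^{n−1}} (u·Ω) (u_⊥)_i u_j u_k G_η(u) dσ(u) = (d₂₂/(n−1)) ( P_{ij} Ω_k + P_{ik} Ω_j ). -/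

import Mathlib

open MeasureTheory Metric
open scoped RealInnerProductSpace

/-- The image of a point of the unit sphere of `ℝⁿ` under a linear isometry. -/
noncomputable def sphereMap {n : ℕ}
    (e : EuclideanSpace ℝ (Fin n) ≃ₗᵢ[ℝ] EuclideanSpace ℝ (Fin n))
    (u : sphere (0 : EuclideanSpace ℝ (Fin n)) 1) :
    sphere (0 : EuclideanSpace ℝ (Fin n)) 1 :=
  ⟨e u, by
    rw [mem_sphere_zero_iff_norm, e.norm_map]
    exact mem_sphere_zero_iff_norm.mp u.2⟩

/-- A measure on the unit sphere of `ℝⁿ` is rotation invariant if it is invariant under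
every linear isometry of `ℝⁿ`. -/
def RotationInvariant {n : ℕ} (σ : Measure (sphere (0 : EuclideanSpace ℝ (Fin n)) 1)) :
    Prop :=
  ∀ e : EuclideanSpace ℝ (Fin n) ≃ₗᵢ[ℝ] EuclideanSpace ℝ (Fin n),
    σ.map (sphereMap e) = σ

/-- The Gibbs density `G_η(u) = e^{η(u·Ω)²}/Z_η` on the unit sphere, with
`Z_η = ∫ e^{η(v·Ω)²} dσ(v)`. -/
noncomputable def gibbs {n : ℕ} (σ : Measure (sphere (0 : EuclideanSpace ℝ (Fin n)) 1))
    (η : ℝ) (Ω : EuclideanSpace ℝ (Fin n))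
    (u : sphere (0 : EuclideanSpace ℝ (Fin n)) 1) : ℝ :=
  Real.exp (η * ⟪(u : EuclideanSpace ℝ (Fin n)), Ω⟫ ^ 2) /
    ∫ v : sphere (0 : EuclideanSpace ℝ (Fin n)) 1,
      Real.exp (η * ⟪(v : EuclideanSpace ℝ (Fin n)), Ω⟫ ^ 2) ∂σ

/-- The `(i,j)` entry of the orthogonal projection matrix `P = Id − Ω⊗Ω` onto `Ω⊥`. -/
noncomputable def projEntry {n : ℕ} (Ω : EuclideanSpace ℝ (Fin n)) (i j : Fin n) : ℝ :=
  (if i = j then (1 : ℝ) else 0) - Ω i * Ω j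


/-!
The reflection of `ℝⁿ` through the axis `ℝΩ` preserves `σ`, `u·Ω` and `G_η`, and negates `u_⊥`.
Writing `u_j = (P e_j)·u + Ω_j (u·Ω)`, the terms odd in `u_⊥` integrate to zero, and the tensor
reduces to `Ω_k M(Pe_i, Pe_j) + Ω_j M(Pe_i, Pe_k)` for the symmetric bilinear form
`M(x, y) = ∫ (u·Ω)² (u·x)(u·y) G_η dσ`. Reflections fixing `Ω` move any unit vector of `Ω⊥` to
any other and preserve `M`, so `M = c ⟨·,·⟩` on `Ω⊥`; its trace over the `P e_i` is `d₂₂`, while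
`∑ |P e_i|² = n − 1`, so `c = d₂₂ / (n − 1)`.
-/

namespace LinearMap.BilinForm

variable {V : Type*} [NormedAddCommGroup V] [InnerProductSpace ℝ V]

theorem apply_self_eq_mul_norm_sq {B : LinearMap.BilinForm ℝ V} {K : Submodule ℝ V} {c : ℝ}
    (hK : ∀ x ∈ K, ‖x‖ = 1 → B x x = c) {z : V} (hz : z ∈ K) : B z z = c * ‖z‖ ^ 2 := by
  rcases eq_or_ne z 0 with rfl | hz0
  · simp
  have hunit := hK _ (K.smul_mem ‖z‖⁻¹ hz) (norm_smul_inv_norm hz0)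
  simp only [map_smul, smul_apply, smul_eq_mul] at hunit
  rw [← hunit]
  field_simp

theorem IsSymm.eq_mul_inner_of_apply_unit_eq {B : LinearMap.BilinForm ℝ V} (hB : B.IsSymm)
    {K : Submodule ℝ V} {c : ℝ} (hK : ∀ x ∈ K, ‖x‖ = 1 → B x x = c) {x y : V}
    (hx : x ∈ K) (hy : y ∈ K) : B x y = c * ⟪x, y⟫ := by
  have hxy := apply_self_eq_mul_norm_sq hK (K.add_mem hx hy)
  rw [map_add, map_add, LinearMap.add_apply, LinearMap.add_apply, hB.eq y x,
    apply_self_eq_mul_norm_sq hK hx, apply_self_eq_mul_norm_sq hK hy, norm_add_sq_real] at hxy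
  linarith

end LinearMap.BilinForm

open Module in
theorem exists_norm_eq_one_mem_orthogonal_span_singleton {V : Type*} [NormedAddCommGroup V]
    [InnerProductSpace ℝ V] [FiniteDimensional ℝ V] (h : 2 ≤ finrank ℝ V) (Ω : V) :
    ∃ x ∈ (ℝ ∙ Ω)ᗮ, ‖x‖ = 1 := by
  have hspan : finrank ℝ (ℝ ∙ Ω) ≤ 1 := (finrank_span_le_card ({Ω} : Set V)).trans (by simp)
  have hpos : 0 < finrank ℝ (ℝ ∙ Ω)ᗮ := by
    have := (ℝ ∙ Ω).finrank_add_finrank_orthogonal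
    omega
  obtain ⟨⟨x, hxK⟩, hne⟩ := finrank_pos_iff_exists_ne_zero.mp hpos
  have hx0 : x ≠ 0 := fun h => hne (Subtype.ext h)
  exact ⟨‖x‖⁻¹ • x, Submodule.smul_mem _ _ hxK, norm_smul_inv_norm hx0⟩

theorem Continuous.integrable_of_compactSpace {X F : Type*} [TopologicalSpace X] [CompactSpace X]
    [MeasurableSpace X] [OpensMeasurableSpace X] [NormedAddCommGroup F] {μ : Measure X}
    [IsFiniteMeasure μ] {f : X → F} (hf : Continuous f) : Integrable f μ :=
  hf.integrable_of_hasCompactSupport (.of_compactSpace f)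

section

variable {n : ℕ}

local notation "E" => EuclideanSpace ℝ (Fin n)
local notation "S" => sphere (0 : EuclideanSpace ℝ (Fin n)) 1

theorem continuous_sphereMap (e : E ≃ₗᵢ[ℝ] E) : Continuous (sphereMap e) := by
  unfold sphereMap; fun_prop

theorem inner_sphereMap (e : E ≃ₗᵢ[ℝ] E) (u : S) (x : E) :
    ⟪(sphereMap e u : E), x⟫ = ⟪(u : E), e.symm x⟫ :=
  e.inner_map_eq_flip _ _

@[fun_prop]
theorem continuous_gibbs (σ : Measure S) (η : ℝ) (Ω : E) : Continuous (gibbs σ η Ω) := by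
  unfold gibbs; fun_prop

theorem gibbs_sphereMap (σ : Measure S) (η : ℝ) {Ω : E} {e : E ≃ₗᵢ[ℝ] E} (he : e Ω = Ω)
    (u : S) : gibbs σ η Ω (sphereMap e u) = gibbs σ η Ω u := by
  rw [gibbs, gibbs, inner_sphereMap, e.symm_apply_eq.mpr he.symm]

theorem RotationInvariant.integral_comp {σ : Measure S} (hinv : RotationInvariant σ)
    (e : E ≃ₗᵢ[ℝ] E) {f : S → ℝ} (hf : Continuous f) : ∫ u, f (sphereMap e u) ∂σ = ∫ u, f u ∂σ := by
  rw [← integral_map (continuous_sphereMap e).aemeasurable hf.aestronglyMeasurable, hinv e]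

theorem RotationInvariant.integral_eq_of_add_comp_eq {σ : Measure S} [IsFiniteMeasure σ]
    (hinv : RotationInvariant σ) (e : E ≃ₗᵢ[ℝ] E) {f g : S → ℝ} (hf : Continuous f)
    (hfg : ∀ u, f u + f (sphereMap e u) = 2 * g u) : ∫ u, f u ∂σ = ∫ u, g u ∂σ := by
  have hsum := integral_add (μ := σ) hf.integrable_of_compactSpace
    (hf.comp (continuous_sphereMap e)).integrable_of_compactSpace
  simp only [Function.comp_def, hfg, integral_const_mul, hinv.integral_comp e hf] at hsum
  linarith

theorem continuous_inner_mul_inner_mul_gibbs (σ : Measure S) (η : ℝ) (Ω x y : E) :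
    Continuous fun u : S => ⟪(u : E), x⟫ * ⟪(u : E), y⟫ * (⟪(u : E), Ω⟫ ^ 2 * gibbs σ η Ω u) := by
  fun_prop

theorem integrable_inner_mul_inner_mul_gibbs (σ : Measure S) [IsFiniteMeasure σ] (η : ℝ)
    (Ω x y : E) :
    Integrable (fun u : S => ⟪(u : E), x⟫ * ⟪(u : E), y⟫ * (⟪(u : E), Ω⟫ ^ 2 * gibbs σ η Ω u)) σ :=
  (continuous_inner_mul_inner_mul_gibbs σ η Ω x y).integrable_of_compactSpace

section SecondMoment

variable (σ : Measure (sphere (0 : EuclideanSpace ℝ (Fin n)) 1)) [IsFiniteMeasure σ] (η : ℝ)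
  (Ω : EuclideanSpace ℝ (Fin n))

noncomputable def secondMoment : LinearMap.BilinForm ℝ E :=
  LinearMap.mk₂ ℝ
    (fun x y => ∫ u, ⟪(u : E), x⟫ * ⟪(u : E), y⟫ * (⟪(u : E), Ω⟫ ^ 2 * gibbs σ η Ω u) ∂σ)
    (fun x x' y => by
      simp only [inner_add_right, add_mul]
      exact integral_add (integrable_inner_mul_inner_mul_gibbs σ η Ω x y)
        (integrable_inner_mul_inner_mul_gibbs σ η Ω x' y))
    (fun c x y => by simp only [real_inner_smul_right, mul_assoc, integral_const_mul, smul_eq_mul])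
    (fun x y y' => by
      simp only [inner_add_right, mul_add, add_mul]
      exact integral_add (integrable_inner_mul_inner_mul_gibbs σ η Ω x y)
        (integrable_inner_mul_inner_mul_gibbs σ η Ω x y'))
    (fun c x y => by
      simp only [real_inner_smul_right, smul_eq_mul, ← integral_const_mul]
      congr 1; ext u; ring)

theorem secondMoment_apply (x y : E) :
    secondMoment σ η Ω x y
      = ∫ u, ⟪(u : E), x⟫ * ⟪(u : E), y⟫ * (⟪(u : E), Ω⟫ ^ 2 * gibbs σ η Ω u) ∂σ :=
  rfl

theorem isSymm_secondMoment : (secondMoment σ η Ω).IsSymm :=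
  ⟨fun x y => by simp only [secondMoment_apply, mul_comm ⟪_, x⟫]⟩

variable {σ Ω}

theorem secondMoment_symm_apply (hinv : RotationInvariant σ) {e : E ≃ₗᵢ[ℝ] E} (he : e Ω = Ω)
    (x y : E) : secondMoment σ η Ω (e.symm x) (e.symm y) = secondMoment σ η Ω x y := by
  have heΩ : e.symm Ω = Ω := e.symm_apply_eq.mpr he.symm
  rw [secondMoment_apply, secondMoment_apply,
    ← hinv.integral_comp e (continuous_inner_mul_inner_mul_gibbs σ η Ω x y)]
  simp only [inner_sphereMap, gibbs_sphereMap σ η he, heΩ]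

theorem secondMoment_apply_self_eq (hinv : RotationInvariant σ) {x x' : E}
    (hx : x ∈ (ℝ ∙ Ω)ᗮ) (hx' : x' ∈ (ℝ ∙ Ω)ᗮ) (hxx' : ‖x‖ = ‖x'‖) :
    secondMoment σ η Ω x x = secondMoment σ η Ω x' x' := by
  set e := (ℝ ∙ (x - x'))ᗮ.reflection
  have he : e Ω = Ω := by
    refine Submodule.reflection_mem_subspace_eq_self ?_
    rw [Submodule.mem_orthogonal_singleton_iff_inner_right, inner_sub_left,
      real_inner_comm, (Submodule.mem_orthogonal_singleton_iff_inner_right).mp hx,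
      real_inner_comm, (Submodule.mem_orthogonal_singleton_iff_inner_right).mp hx', sub_zero]
  have hex : e.symm x' = x := e.symm_apply_eq.mpr (Submodule.reflection_sub hxx').symm
  rw [← hex, secondMoment_symm_apply η hinv he]

theorem secondMoment_eq_mul_inner (hinv : RotationInvariant σ) {x₀ : E}
    (hx₀ : x₀ ∈ (ℝ ∙ Ω)ᗮ) (hx₀1 : ‖x₀‖ = 1) {x y : E} (hx : x ∈ (ℝ ∙ Ω)ᗮ)
    (hy : y ∈ (ℝ ∙ Ω)ᗮ) :
    secondMoment σ η Ω x y = secondMoment σ η Ω x₀ x₀ * ⟪x, y⟫ :=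
  (isSymm_secondMoment σ η Ω).eq_mul_inner_of_apply_unit_eq
    (fun _ hz hz1 => secondMoment_apply_self_eq η hinv hz hx₀ (hz1.trans hx₀1.symm)) hx hy

end SecondMoment

noncomputable def orthSingle (Ω : E) (i : Fin n) : E :=
  EuclideanSpace.single i 1 - Ω i • Ω

section OrthSingle

variable {Ω : EuclideanSpace ℝ (Fin n)}

theorem inner_orthSingle (v : E) (i : Fin n) :
    ⟪v, orthSingle Ω i⟫ = v i - ⟪v, Ω⟫ * Ω i := by
  simp [orthSingle, inner_sub_right, real_inner_smul_right, EuclideanSpace.inner_single_right,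
    mul_comm]

theorem orthSingle_mem (hΩ : ‖Ω‖ = 1) (i : Fin n) : orthSingle Ω i ∈ (ℝ ∙ Ω)ᗮ := by
  rw [Submodule.mem_orthogonal_singleton_iff_inner_right, inner_orthSingle,
    real_inner_self_eq_norm_sq, hΩ]
  ring

theorem inner_orthSingle_orthSingle (hΩ : ‖Ω‖ = 1) (i j : Fin n) :
    ⟪orthSingle Ω i, orthSingle Ω j⟫ = projEntry Ω i j := by
  have hΩi : ⟪orthSingle Ω i, Ω⟫ = 0 :=
    (Submodule.mem_orthogonal_singleton_iff_inner_left.mp (orthSingle_mem hΩ i))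
  rw [inner_orthSingle, hΩi, zero_mul, sub_zero, orthSingle, projEntry, PiLp.sub_apply,
    PiLp.smul_apply, PiLp.single_apply, smul_eq_mul]
  simp only [eq_comm]

theorem sum_projEntry_self (hΩ : ‖Ω‖ = 1) : ∑ i, projEntry Ω i i = (n : ℝ) - 1 := by
  have hsq : ∑ i, Ω i * Ω i = 1 := by simpa [sq, hΩ] using (EuclideanSpace.real_norm_sq_eq Ω).symm
  simp [projEntry, Finset.sum_sub_distrib, hsq]

theorem sum_inner_orthSingle_sq (hΩ : ‖Ω‖ = 1) {u : E} (hu : ‖u‖ = 1) :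
    ∑ i, ⟪u, orthSingle Ω i⟫ ^ 2 = 1 - ⟪u, Ω⟫ ^ 2 := by
  calc ∑ i, ⟪u, orthSingle Ω i⟫ ^ 2 = ‖u - ⟪u, Ω⟫ • Ω‖ ^ 2 := by
        simp [EuclideanSpace.real_norm_sq_eq, inner_orthSingle]
    _ = 1 - ⟪u, Ω⟫ ^ 2 := by
        rw [norm_sub_sq_real, norm_smul, real_inner_smul_right, hu, hΩ, Real.norm_eq_abs,
          mul_one, sq_abs]
        ring

end OrthSingle

section Moments

variable {σ : Measure (sphere (0 : EuclideanSpace ℝ (Fin n)) 1)} [IsFiniteMeasure σ] (η : ℝ)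
  {Ω : EuclideanSpace ℝ (Fin n)}

theorem integral_sq_mul_one_sub_sq_mul_gibbs_eq_sum (hΩ : ‖Ω‖ = 1) :
    ∫ u : S, ⟪(u : E), Ω⟫ ^ 2 * (1 - ⟪(u : E), Ω⟫ ^ 2) * gibbs σ η Ω u ∂σ
      = ∑ i, secondMoment σ η Ω (orthSingle Ω i) (orthSingle Ω i) := by
  simp only [secondMoment_apply]
  rw [← integral_finsetSum _ fun i _ => integrable_inner_mul_inner_mul_gibbs σ η Ω _ _]
  refine integral_congr_ae (.of_forall fun u => ?_)
  dsimp only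
  rw [← Finset.sum_mul, ← sum_inner_orthSingle_sq hΩ (mem_sphere_zero_iff_norm.mp u.2)]
  simp only [sq]
  ring

theorem secondMoment_eq_div_mul_inner (hn : 2 ≤ n) (hinv : RotationInvariant σ) (hΩ : ‖Ω‖ = 1)
    {x y : E} (hx : x ∈ (ℝ ∙ Ω)ᗮ) (hy : y ∈ (ℝ ∙ Ω)ᗮ) :
    secondMoment σ η Ω x y
      = (∫ u : S, ⟪(u : E), Ω⟫ ^ 2 * (1 - ⟪(u : E), Ω⟫ ^ 2) * gibbs σ η Ω u ∂σ) /
          ((n : ℝ) - 1) * ⟪x, y⟫ := by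
  obtain ⟨x₀, hx₀, hx₀1⟩ := exists_norm_eq_one_mem_orthogonal_span_singleton
    (by rwa [finrank_euclideanSpace_fin]) Ω
  have hn1 : (n : ℝ) - 1 ≠ 0 := by
    have : (2 : ℝ) ≤ n := by exact_mod_cast hn
    linarith
  rw [secondMoment_eq_mul_inner η hinv hx₀ hx₀1 hx hy,
    integral_sq_mul_one_sub_sq_mul_gibbs_eq_sum η hΩ]
  simp only [secondMoment_eq_mul_inner η hinv hx₀ hx₀1 (orthSingle_mem hΩ _) (orthSingle_mem hΩ _),
    inner_orthSingle_orthSingle hΩ, ← Finset.mul_sum, sum_projEntry_self hΩ]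
  field_simp

/-- The reflection through the axis `ℝΩ` fixes `u·Ω` and negates `u·a` for `a ⊥ Ω`, so the
terms of odd degree in the `u·a` integrate to zero. -/
theorem integral_inner_mul_inner_mul_add_mul_add (hinv : RotationInvariant σ) {a b c : E}
    (ha : a ∈ (ℝ ∙ Ω)ᗮ) (hb : b ∈ (ℝ ∙ Ω)ᗮ) (hc : c ∈ (ℝ ∙ Ω)ᗮ) (β γ : ℝ) :
    ∫ u : S, ⟪(u : E), Ω⟫ * ⟪(u : E), a⟫ * (⟪(u : E), b⟫ + β * ⟪(u : E), Ω⟫) *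
        (⟪(u : E), c⟫ + γ * ⟪(u : E), Ω⟫) * gibbs σ η Ω u ∂σ
      = γ * secondMoment σ η Ω a b + β * secondMoment σ η Ω a c := by
  set e := (ℝ ∙ Ω).reflection
  have he : e Ω = Ω :=
    Submodule.reflection_mem_subspace_eq_self (Submodule.mem_span_singleton_self Ω)
  have hneg : ∀ v ∈ (ℝ ∙ Ω)ᗮ, e.symm v = -v := fun v hv => by
    rw [Submodule.reflection_symm, Submodule.reflection_mem_subspace_orthogonalComplement_eq_neg hv]
  rw [secondMoment_apply, secondMoment_apply, ← integral_const_mul, ← integral_const_mul,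
    ← integral_add ((integrable_inner_mul_inner_mul_gibbs σ η Ω a b).const_mul γ)
      ((integrable_inner_mul_inner_mul_gibbs σ η Ω a c).const_mul β)]
  refine hinv.integral_eq_of_add_comp_eq e (by fun_prop) fun u => ?_
  simp only [inner_sphereMap, gibbs_sphereMap σ η he, e.symm_apply_eq.mpr he.symm, hneg a ha,
    hneg b hb, hneg c hc, inner_neg_right]
  ring

end Moments

end

/-- The 3-tensor `H₂^r = ∫ (u·Ω) P_{Ω⊥}u ⊗ u ⊗ u G_η dσ` equals
`(d₂₂/(n−1)) (P_{ij}Ω_k + P_{ik}Ω_j)`, with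
`d₂₂ = ∫ (u·Ω)²(1−(u·Ω)²) G_η dσ`. -/
theorem gibbs_H2r_tensor (n : ℕ) (hn : 2 ≤ n)
    (σ : Measure (sphere (0 : EuclideanSpace ℝ (Fin n)) 1))
    (hprob : IsProbabilityMeasure σ) (hinv : RotationInvariant σ)
    (Ω : EuclideanSpace ℝ (Fin n)) (hΩ : ‖Ω‖ = 1) (η : ℝ) :
    ∀ i j k : Fin n,
      (∫ u : sphere (0 : EuclideanSpace ℝ (Fin n)) 1,
          ⟪(u : EuclideanSpace ℝ (Fin n)), Ω⟫ *
            ((u : EuclideanSpace ℝ (Fin n)) i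
              - ⟪(u : EuclideanSpace ℝ (Fin n)), Ω⟫ * Ω i) *
            (u : EuclideanSpace ℝ (Fin n)) j * (u : EuclideanSpace ℝ (Fin n)) k *
            gibbs σ η Ω u ∂σ)
        = ((∫ u : sphere (0 : EuclideanSpace ℝ (Fin n)) 1,
              ⟪(u : EuclideanSpace ℝ (Fin n)), Ω⟫ ^ 2 *
                (1 - ⟪(u : EuclideanSpace ℝ (Fin n)), Ω⟫ ^ 2) * gibbs σ η Ω u ∂σ) /
            ((n : ℝ) - 1)) *
          (projEntry Ω i j * Ω k + projEntry Ω i k * Ω j) := by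
  intro i j k
  have hmem := orthSingle_mem hΩ
  have hcoord : ∀ v : EuclideanSpace ℝ (Fin n), ⟪v, Ω⟫ * (v i - ⟪v, Ω⟫ * Ω i) * v j * v k
      = ⟪v, Ω⟫ * ⟪v, orthSingle Ω i⟫ * (⟪v, orthSingle Ω j⟫ + Ω j * ⟪v, Ω⟫) *
          (⟪v, orthSingle Ω k⟫ + Ω k * ⟪v, Ω⟫) := fun v => by
    simp only [inner_orthSingle]; ring
  simp only [hcoord]
  rw [integral_inner_mul_inner_mul_add_mul_add η hinv (hmem i) (hmem j) (hmem k),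
    secondMoment_eq_div_mul_inner η hn hinv hΩ (hmem i) (hmem j),
    secondMoment_eq_div_mul_inner η hn hinv hΩ (hmem i) (hmem k),
    inner_orthSingle_orthSingle hΩ, inner_orthSingle_orthSingle hΩ]
  ring
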